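/- For any vector r ∈ ℝ^{N−1} with entries r_2,…,r_N, the polynomial λ(τ) = ∑_{i=1}^N (A† r)_i L_i(τ) satisfies λ(1) = −w_N ∑_{i=2}^{N−1} M_i(1) r_i + w_N r_N. -/

import Mathlib

open Polynomial

/-- `lagL τ i` is the `i`-th Lagrange basis polynomial (of degree `N - 1`)
for the nodes `τ 0, …, τ (N-1)`, satisfying `(lagL τ i).eval (τ j) = δᵢⱼ`. -/
noncomputable def lagL {N : ℕ} (τ : Fin N → ℝ) (i : Fin N) : ℝ[X] :=
  Lagrange.basis Finset.univ τ i

/-- `lagLp τ` is the polynomial `L_p(x) = ∏ᵢ (x - τᵢ)`. -/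
noncomputable def lagLp {N : ℕ} (τ : Fin N → ℝ) : ℝ[X] :=
  ∏ i, (X - C (τ i))

/-- The differentiation matrix `D`, with `D i j = L_j'(τ i)`. -/
noncomputable def matD {N : ℕ} (τ : Fin N → ℝ) : Matrix (Fin N) (Fin N) ℝ :=
  fun i j => (derivative (lagL τ j)).eval (τ i)

/-- The vector `D_p`, with `(D_p) i = L_p'(τ i)`. -/
noncomputable def vecDp {N : ℕ} (τ : Fin N → ℝ) : Fin N → ℝ :=
  fun i => (derivative (lagLp τ)).eval (τ i)

/-- Columns `2, …, N+1` (in 1-based numbering) of the augmented differentiation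
matrix `D̃ = [D  D_p]`: column `j` (0-based, `j < N - 1`) is column `j + 1` of `D`,
and the last column is `D_p`. -/
noncomputable def matDtil2 {N : ℕ} (τ : Fin N → ℝ) : Matrix (Fin N) (Fin N) ℝ :=
  fun i j => if h : (j : ℕ) + 1 < N then matD τ i ⟨(j : ℕ) + 1, h⟩ else vecDp τ i

/-- The quadrature rule with nodes `τ` and weights `w` integrates exactly all
polynomials of degree at most `2 * N - 3` over `[-1, 1]`. -/
def IsQuadrature {N : ℕ} (τ : Fin N → ℝ) (w : Fin N → ℝ) : Prop :=
  ∀ p : ℝ[X], p.natDegree ≤ 2 * N - 3 →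
    ∑ i, w i * p.eval (τ i) = ∫ t in (-1 : ℝ)..1, p.eval t

/-- The integration matrix `A` with rows indexed (0-based) by `i : Fin (N-1)`
corresponding to the node `τ (i+1)`: `A i j = ∫_{-1}^{τ (i+1)} L_j(t) dt`. -/
noncomputable def matA {N : ℕ} (τ : Fin N → ℝ) : Matrix (Fin (N - 1)) (Fin N) ℝ :=
  fun i j => ∫ t in (-1 : ℝ)..(τ ⟨(i : ℕ) + 1, by have := i.isLt; omega⟩), (lagL τ j).eval t

/-- The row vector `A_p`, with `(A_p) j = (1/N) ∏_{k ≠ j} 1 / (τ j - τ k)`. -/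
noncomputable def rowAp {N : ℕ} (τ : Fin N → ℝ) : Fin N → ℝ :=
  fun j => (1 / (N : ℝ)) * ∏ k ∈ Finset.univ.erase j, (τ j - τ k)⁻¹

/-- The matrix `Ã` obtained by stacking `A` on top of the row vector `A_p`. -/
noncomputable def matAtil {N : ℕ} (τ : Fin N → ℝ) : Matrix (Fin N) (Fin N) ℝ :=
  fun i j => if h : (i : ℕ) + 1 < N then matA τ ⟨(i : ℕ), by omega⟩ j else rowAp τ j

/-- The adjoint integration matrix `A† = W⁻¹ Aᵀ W_{2:N}`, with columns indexed
(0-based) by `j : Fin (N-1)` corresponding to the node `τ (j+1)`. -/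
noncomputable def matAdag {N : ℕ} (τ : Fin N → ℝ) (w : Fin N → ℝ) :
    Matrix (Fin N) (Fin (N - 1)) ℝ :=
  fun i j => (w i)⁻¹ * matA τ j i * w ⟨(j : ℕ) + 1, by have := j.isLt; omega⟩

/-- `polyM τ k` is the Lagrange basis polynomial (of degree `N - 3`) for the
interior nodes `τ 1, …, τ (N-2)`, satisfying `(polyM τ k).eval (τ m) = δₖₘ`
for interior indices `m`. -/
noncomputable def polyM {N : ℕ} (τ : Fin N → ℝ) (k : Fin N) : ℝ[X] :=
  Lagrange.basis (Finset.univ.filter fun m : Fin N => 0 < (m : ℕ) ∧ (m : ℕ) < N - 1) τ k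

/-- The polynomial `λ(x) = ∑ᵢ (A† r)ᵢ Lᵢ(x)`. -/
noncomputable def lamP {N : ℕ} (τ : Fin N → ℝ) (w : Fin N → ℝ) (r : Fin (N - 1) → ℝ) : ℝ[X] :=
  ∑ i, C ((matAdag τ w).mulVec r i) * lagL τ i

/-! The value `λ(1)` is the last entry of `A† r`, namely `w_N⁻¹ ∑_j w_j F(τ_j) r_j` with
`F(x) = ∫_{-1}^x L_N`. Exactness of the quadrature on `L_N` gives `F(1) = w_N`. For an interior
node `m`, integrating `F M_m` by parts against an antiderivative `Q` of `M_m` and applying the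
quadrature to `L_N Q` shows `∫ F M_m = 0`; applying the quadrature to `F M_m` itself, only the
nodes `τ_m` and `τ_N` contribute (`F(τ_1) = 0` and `M_m` vanishes at the other interior nodes),
so `w_m F(τ_m) = -w_N² M_m(1)`. -/

namespace Polynomial

section Antiderivative

variable {K : Type*} [Field K]

noncomputable def antideriv (p : K[X]) : K[X] :=
  p.sum fun n a => C (a / (n + 1)) * X ^ (n + 1)

theorem derivative_antideriv [CharZero K] (p : K[X]) : derivative (antideriv p) = p := by
  rw [antideriv, Polynomial.sum, map_sum]
  conv_rhs => rw [← p.sum_C_mul_X_pow_eq, Polynomial.sum]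
  refine Finset.sum_congr rfl fun n _ => ?_
  rw [derivative_C_mul, derivative_X_pow, ← mul_assoc, ← C_mul, Nat.add_sub_cancel]
  push_cast
  rw [div_mul_cancel₀ _ (Nat.cast_add_one_ne_zero n)]

theorem natDegree_antideriv_le (p : K[X]) : (antideriv p).natDegree ≤ p.natDegree + 1 := by
  rw [antideriv, Polynomial.sum]
  refine (natDegree_sum_le _ _).trans ?_
  rw [Finset.fold_max_le]
  refine ⟨Nat.zero_le _, fun n hn => (natDegree_C_mul_le _ _).trans ?_⟩
  rw [natDegree_X_pow]
  exact Nat.add_le_add_right (le_natDegree_of_mem_supp n hn) 1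

noncomputable def antiderivFrom (a : K) (p : K[X]) : K[X] :=
  antideriv p - C ((antideriv p).eval a)

theorem derivative_antiderivFrom [CharZero K] (a : K) (p : K[X]) :
    derivative (antiderivFrom a p) = p := by
  rw [antiderivFrom, derivative_sub, derivative_C, sub_zero, derivative_antideriv]

theorem eval_antiderivFrom_self (a : K) (p : K[X]) : (antiderivFrom a p).eval a = 0 := by
  rw [antiderivFrom, eval_sub, eval_C, sub_self]

theorem natDegree_antiderivFrom_le (a : K) (p : K[X]) :
    (antiderivFrom a p).natDegree ≤ p.natDegree + 1 :=
  (natDegree_sub_le _ _).trans <| by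
    simpa only [natDegree_C, max_le_iff] using ⟨natDegree_antideriv_le p, Nat.zero_le _⟩

end Antiderivative

theorem integral_eval_derivative (p : ℝ[X]) (a b : ℝ) :
    ∫ t in a..b, (derivative p).eval t = p.eval b - p.eval a :=
  intervalIntegral.integral_eq_sub_of_hasDerivAt (fun x _ => p.hasDerivAt x)
    ((derivative p).continuous.intervalIntegrable a b)

theorem eval_antiderivFrom (a b : ℝ) (p : ℝ[X]) :
    (antiderivFrom a p).eval b = ∫ t in a..b, p.eval t := by
  have h := integral_eval_derivative (antiderivFrom a p) a b
  rwa [derivative_antiderivFrom, eval_antiderivFrom_self, sub_zero, eq_comm] at h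

theorem integral_eval_mul_derivative (p q : ℝ[X]) (a b : ℝ) :
    ∫ t in a..b, (p * derivative q).eval t =
      p.eval b * q.eval b - p.eval a * q.eval a - ∫ t in a..b, (derivative p * q).eval t := by
  simp only [eval_mul]
  exact intervalIntegral.integral_mul_deriv_eq_deriv_mul (fun x _ => p.hasDerivAt x)
    (fun x _ => q.hasDerivAt x) ((derivative p).continuous.intervalIntegrable a b)
    ((derivative q).continuous.intervalIntegrable a b)

end Polynomial

section Lagrange

variable {N : ℕ} {τ : Fin N → ℝ}

theorem eval_lagL (hτ : Function.Injective τ) (i j : Fin N) :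
    (lagL τ i).eval (τ j) = if i = j then 1 else 0 := by
  split_ifs with h
  · exact h ▸ Lagrange.eval_basis_self hτ.injOn (Finset.mem_univ i)
  · exact Lagrange.eval_basis_of_ne h (Finset.mem_univ j)

theorem natDegree_lagL (hτ : Function.Injective τ) (i : Fin N) :
    (lagL τ i).natDegree = N - 1 := by
  rw [lagL, Lagrange.natDegree_basis hτ.injOn (Finset.mem_univ i), Finset.card_univ,
    Fintype.card_fin]

theorem sum_mul_eval_lagL_mul (hτ : Function.Injective τ) (w : Fin N → ℝ) (j : Fin N)
    (q : ℝ[X]) : ∑ i, w i * (lagL τ j * q).eval (τ i) = w j * q.eval (τ j) := by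
  simp only [eval_mul, eval_lagL hτ, ite_mul, one_mul, zero_mul, mul_ite, mul_zero,
    Finset.sum_ite_eq, Finset.mem_univ, if_true]

theorem eval_lamP (hτ : Function.Injective τ) (w : Fin N → ℝ) (r : Fin (N - 1) → ℝ)
    (i : Fin N) : (lamP τ w r).eval (τ i) = (matAdag τ w).mulVec r i := by
  simp only [lamP, eval_finsetSum, eval_mul, eval_C, eval_lagL hτ, mul_ite, mul_one, mul_zero,
    Finset.sum_ite_eq', Finset.mem_univ, if_true]

theorem IsQuadrature.integral_lagL_mul {w : Fin N → ℝ} (hquad : IsQuadrature τ w)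
    (hτ : Function.Injective τ) (j : Fin N) {q : ℝ[X]} (hq : q.natDegree ≤ N - 2) :
    ∫ t in (-1 : ℝ)..1, (lagL τ j * q).eval t = w j * q.eval (τ j) := by
  have hdeg : (lagL τ j * q).natDegree ≤ 2 * N - 3 :=
    natDegree_mul_le.trans (by have := j.isLt; rw [natDegree_lagL hτ]; omega)
  rw [← hquad _ hdeg, sum_mul_eval_lagL_mul hτ]

end Lagrange

theorem card_filter_pos_lt_sub_one (N : ℕ) :
    (Finset.univ.filter fun m : Fin N => 0 < (m : ℕ) ∧ (m : ℕ) < N - 1).card = N - 2 := by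
  have h : (Finset.univ.filter fun m : Fin N => 0 < (m : ℕ) ∧ (m : ℕ) < N - 1).map
      Fin.valEmbedding = Finset.Ioo 0 (N - 1) := by
    ext n
    simp only [Finset.mem_map, Finset.mem_filter, Finset.mem_univ, true_and, Finset.mem_Ioo,
      Fin.valEmbedding_apply]
    exact ⟨fun ⟨m, hm, hmn⟩ => hmn ▸ hm, fun hn => ⟨⟨n, by omega⟩, hn, rfl⟩⟩
  rw [← Finset.card_map, h, Nat.card_Ioo]
  omega

section Endpoint

variable {N : ℕ} {τ w : Fin N → ℝ}

theorem IsQuadrature.eval_one_antiderivFrom_lagL (hquad : IsQuadrature τ w)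
    (hτ : Function.Injective τ) {last : Fin N} (h1 : τ last = 1) :
    (antiderivFrom (-1) (lagL τ last)).eval 1 = w last := by
  simpa [eval_antiderivFrom, h1] using hquad.integral_lagL_mul hτ last (q := 1) (by simp)

theorem IsQuadrature.integral_antiderivFrom_lagL_mul_eq_zero (hquad : IsQuadrature τ w)
    (hτ : Function.Injective τ) {last : Fin N} (h1 : τ last = 1) {q : ℝ[X]}
    (hq : q.natDegree + 3 ≤ N) :
    ∫ t in (-1 : ℝ)..1, (antiderivFrom (-1) (lagL τ last) * q).eval t = 0 := by
  have hQ : (antideriv q).natDegree ≤ N - 2 := (natDegree_antideriv_le q).trans (by omega)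
  set F := antiderivFrom (-1) (lagL τ last)
  set Q := antideriv q
  calc ∫ t in (-1 : ℝ)..1, (F * q).eval t
      = ∫ t in (-1 : ℝ)..1, (F * derivative Q).eval t := by rw [derivative_antideriv]
    _ = F.eval 1 * Q.eval 1 - F.eval (-1) * Q.eval (-1)
          - ∫ t in (-1 : ℝ)..1, (lagL τ last * Q).eval t := by
      rw [integral_eval_mul_derivative, derivative_antiderivFrom]
    _ = 0 := by
      rw [hquad.eval_one_antiderivFrom_lagL hτ h1, eval_antiderivFrom_self,
        hquad.integral_lagL_mul hτ last hQ, h1]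
      ring

theorem IsQuadrature.weight_mul_eval_antiderivFrom_lagL (hquad : IsQuadrature τ w)
    (hτ : Function.Injective τ) {first last : Fin N} (hfirst : (first : ℕ) = 0)
    (hlast : (last : ℕ) = N - 1) (h0 : τ first = -1) (h1 : τ last = 1) {m : Fin N}
    (hm : m ∈ Finset.univ.filter fun k : Fin N => 0 < (k : ℕ) ∧ (k : ℕ) < N - 1) :
    w m * (antiderivFrom (-1) (lagL τ last)).eval (τ m) =
      -(w last * w last * (polyM τ m).eval 1) := by
  have hdegF : (antiderivFrom (-1) (lagL τ last)).natDegree ≤ N :=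
    (natDegree_antiderivFrom_le _ _).trans (by rw [natDegree_lagL hτ]; omega)
  set F := antiderivFrom (-1) (lagL τ last)
  set s := Finset.univ.filter fun k : Fin N => 0 < (k : ℕ) ∧ (k : ℕ) < N - 1
  have hms : 0 < (m : ℕ) ∧ (m : ℕ) < N - 1 := (Finset.mem_filter.mp hm).2
  have hmlast : m ≠ last := fun h => by rw [h] at hms; omega
  have hdegM : (polyM τ m).natDegree + 3 ≤ N := by
    rw [polyM, Lagrange.natDegree_basis hτ.injOn hm, card_filter_pos_lt_sub_one]
    omega
  have hsum := hquad (F * polyM τ m) (natDegree_mul_le.trans (by omega))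
  rw [hquad.integral_antiderivFrom_lagL_mul_eq_zero hτ h1 hdegM,
    ← Finset.sum_subset (Finset.subset_univ {m, last}), Finset.sum_pair hmlast, polyM] at hsum
  · rw [eval_mul, eval_mul, Lagrange.eval_basis_self hτ.injOn hm, h1,
      hquad.eval_one_antiderivFrom_lagL hτ h1] at hsum
    rw [polyM]
    linear_combination hsum
  · intro i _ hi
    simp only [Finset.mem_insert, Finset.mem_singleton, not_or] at hi
    rw [eval_mul, polyM]
    by_cases hif : i = first
    · rw [hif, h0, eval_antiderivFrom_self, zero_mul, mul_zero]
    · have his : i ∈ s := by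
        simp only [s, Finset.mem_filter, Finset.mem_univ, true_and]
        have := i.isLt
        have := Fin.val_ne_of_ne hif
        have := Fin.val_ne_of_ne hi.2
        omega
      rw [Lagrange.eval_basis_of_ne (Ne.symm hi.1) his, mul_zero, mul_zero]

end Endpoint

theorem sum_fin_sub_one_eq_sum_filter_add {M : Type*} [AddCommMonoid M] {N : ℕ} (hN : 2 ≤ N)
    (g : Fin N → Fin (N - 1) → M) :
    ∑ j : Fin (N - 1), g ⟨j + 1, by omega⟩ j =
      ∑ k ∈ Finset.univ.filter (fun k : Fin N => 0 < (k : ℕ) ∧ (k : ℕ) < N - 1),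
          g k ⟨k - 1, by omega⟩ + g ⟨N - 1, by omega⟩ ⟨N - 2, by omega⟩ := by
  have hlast : Finset.univ.filter (fun k : Fin N => 0 < (k : ℕ) ∧ ¬(k : ℕ) < N - 1) =
      {⟨N - 1, by omega⟩} := by
    ext k
    simp only [Finset.mem_filter, Finset.mem_univ, true_and, Finset.mem_singleton, Fin.ext_iff]
    omega
  calc ∑ j : Fin (N - 1), g ⟨j + 1, by omega⟩ j
      = ∑ k ∈ Finset.univ.filter (fun k : Fin N => 0 < (k : ℕ)),
          g k ⟨k - 1, by omega⟩ := by
        refine Finset.sum_nbij' (fun j => ⟨j + 1, by omega⟩) (fun k => ⟨k - 1, by omega⟩)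
          (fun j _ => by simp) (fun _ _ => Finset.mem_univ _) (fun j _ => by simp)
          (fun k hk => Fin.ext ?_) (fun _ _ => rfl)
        simp only [Finset.mem_filter, Finset.mem_univ, true_and] at hk
        simp only
        omega
    _ = _ := by
      rw [← Finset.sum_filter_add_sum_filter_not _ (fun k : Fin N => (k : ℕ) < N - 1),
        Finset.filter_filter, Finset.filter_filter, hlast, Finset.sum_singleton]
      rfl

/-- `λ(1) = -w_N ∑_{i=2}^{N-1} Mᵢ(1) rᵢ + w_N r_N`. -/
theorem stmt12 (N : ℕ) (hN : 3 ≤ N) (τ : Fin N → ℝ) (hmono : StrictMono τ)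
    (h0 : τ ⟨0, by omega⟩ = -1) (h1 : τ ⟨N - 1, by omega⟩ = 1) (w : Fin N → ℝ) (hquad : IsQuadrature τ w) :
    ∀ r : Fin (N - 1) → ℝ,
      (lamP τ w r).eval 1 =
        - w ⟨N - 1, by omega⟩ *
            (∑ k ∈ Finset.univ.filter (fun k : Fin N => 0 < (k : ℕ) ∧ (k : ℕ) < N - 1),
              (polyM τ k).eval 1 * r ⟨(k : ℕ) - 1, by have := k.isLt; omega⟩)
          + w ⟨N - 1, by omega⟩ * r ⟨N - 2, by omega⟩ := by
  intro r
  have hτ := hmono.injective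
  set last : Fin N := ⟨N - 1, by omega⟩
  set F := antiderivFrom (-1) (lagL τ last)
  have hlam : (lamP τ w r).eval 1 = ∑ j : Fin (N - 1),
      (w last)⁻¹ * F.eval (τ ⟨j + 1, by omega⟩) * w ⟨j + 1, by omega⟩ * r j := by
    simp only [← h1, eval_lamP hτ, Matrix.mulVec, dotProduct, matAdag, matA, F,
      eval_antiderivFrom]
  rw [hlam, sum_fin_sub_one_eq_sum_filter_add (by omega)
    (fun k j => (w last)⁻¹ * F.eval (τ k) * w k * r j), Finset.mul_sum]
  congr 1
  · refine Finset.sum_congr rfl fun k hk => ?_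
    have hweight := hquad.weight_mul_eval_antiderivFrom_lagL hτ (first := ⟨0, by omega⟩)
      rfl rfl h0 h1 hk
    calc (w last)⁻¹ * F.eval (τ k) * w k * r ⟨k - 1, by omega⟩
        = -((w last)⁻¹ * w last * w last) * ((polyM τ k).eval 1 * r ⟨k - 1, by omega⟩) := by
          linear_combination (w last)⁻¹ * r ⟨k - 1, by omega⟩ * hweight
      _ = _ := by rw [inv_mul_mul_self]
  · rw [h1, hquad.eval_one_antiderivFrom_lagL hτ h1, inv_mul_mul_self]
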